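/- If C = C₁ + 2C₂ is a ℤ₄-linear code built from binary linear codes C₁ ⊆ C₂ (closed under the Schur product), then its symmetrized weight enumerator is obtained from the joint weight enumerator by swe_C(a,b,c) = jwe_{C₁,C₂}(a, c, b, b). -/
import Mathlib


/-- Natural embedding of `𝔽₂` into `ℤ₄`: `0 ↦ 0`, `1 ↦ 1`. -/
def phi (x : ZMod 2) : ZMod 4 := (x.val : ZMod 4)

/-- The set `C₁ + 2C₂ ⊆ ℤ₄ⁿ` obtained from two binary codes. -/
def z4code {n : ℕ} (A B : Set (Fin n → ZMod 2)) : Set (Fin n → ZMod 4) :=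
  {x | ∃ c₁ ∈ A, ∃ c₂ ∈ B, x = fun k => phi (c₁ k) + 2 * phi (c₂ k)}

/-- Dual of a `ℤ₄`-code. -/
def dualZ4 {n : ℕ} (C : Set (Fin n → ZMod 4)) : Set (Fin n → ZMod 4) :=
  {x | ∀ y ∈ C, ∑ k, x k * y k = 0}

/-- Dual of a binary code. -/
def dual2 {n : ℕ} (C : Set (Fin n → ZMod 2)) : Set (Fin n → ZMod 2) :=
  {x | ∀ y ∈ C, ∑ k, x k * y k = 0}
/-- `dij i j c₁ c₂` counts coordinates `k` with `(c₁ k, c₂ k) = (i, j)`. -/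
def dij {n : ℕ} (i j : ZMod 2) (c₁ c₂ : Fin n → ZMod 2) : ℕ :=
  (Finset.univ.filter (fun k => c₁ k = i ∧ c₂ k = j)).card

open Classical in
/-- Joint weight enumerator of two binary codes. -/
noncomputable def jwe {n : ℕ} (A B : Set (Fin n → ZMod 2)) (a b c d : ℝ) : ℝ :=
  ∑ c₁ ∈ Finset.univ.filter (· ∈ A), ∑ c₂ ∈ Finset.univ.filter (· ∈ B),
    a ^ dij 0 0 c₁ c₂ * b ^ dij 0 1 c₁ c₂ * c ^ dij 1 0 c₁ c₂ * d ^ dij 1 1 c₁ c₂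

/-- `nI i c` counts coordinates of `c` equal to `i`. -/
def nI {n : ℕ} (i : ZMod 4) (c : Fin n → ZMod 4) : ℕ :=
  (Finset.univ.filter (fun k => c k = i)).card

open Classical in
/-- Symmetrized weight enumerator of a `ℤ₄`-code. -/
noncomputable def swe {n : ℕ} (C : Set (Fin n → ZMod 4)) (a b c : ℝ) : ℝ :=
  ∑ u ∈ Finset.univ.filter (· ∈ C), a ^ nI 0 u * b ^ (nI 1 u + nI 3 u) * c ^ nI 2 u

lemma phi_pair_inj : ∀ a b a' b' : ZMod 2,
    phi a + 2 * phi b = phi a' + 2 * phi b' → a = a' ∧ b = b' := by decide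

lemma nI_eq_dij {n : ℕ} (c₁ c₂ : Fin n → ZMod 2) :
    nI 0 (fun k => phi (c₁ k) + 2 * phi (c₂ k)) = dij 0 0 c₁ c₂ ∧
    nI 2 (fun k => phi (c₁ k) + 2 * phi (c₂ k)) = dij 0 1 c₁ c₂ ∧
    nI 1 (fun k => phi (c₁ k) + 2 * phi (c₂ k)) = dij 1 0 c₁ c₂ ∧
    nI 3 (fun k => phi (c₁ k) + 2 * phi (c₂ k)) = dij 1 1 c₁ c₂ := by
  have h0 : ∀ a b : ZMod 2, phi a + 2 * phi b = 0 ↔ a = 0 ∧ b = 0 := by decide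
  have h2 : ∀ a b : ZMod 2, phi a + 2 * phi b = 2 ↔ a = 0 ∧ b = 1 := by decide
  have h1 : ∀ a b : ZMod 2, phi a + 2 * phi b = 1 ↔ a = 1 ∧ b = 0 := by decide
  have h3 : ∀ a b : ZMod 2, phi a + 2 * phi b = 3 ↔ a = 1 ∧ b = 1 := by decide
  refine ⟨?_, ?_, ?_, ?_⟩ <;>
    · unfold nI dij
      congr 1
      ext k
      simp [h0, h1, h2, h3]

theorem swe_eq_jwe {n : ℕ} (C₁ C₂ : Submodule (ZMod 2) (Fin n → ZMod 2)) (h : C₁ ≤ C₂)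
    (hschur : ∀ c₁ ∈ C₁, ∀ c₁' ∈ C₁, (fun k => c₁ k * c₁' k) ∈ C₂) :
    ∀ a b c : ℝ,
      swe (z4code (C₁ : Set (Fin n → ZMod 2)) (C₂ : Set (Fin n → ZMod 2))) a b c =
        jwe (C₁ : Set (Fin n → ZMod 2)) (C₂ : Set (Fin n → ZMod 2)) a c b b := by
  intro a b c
  classical
  unfold swe jwe
  rw [← Finset.sum_product']
  refine (Finset.sum_bij (fun p _ => fun k => phi (p.1 k) + 2 * phi (p.2 k)) ?_ ?_ ?_ ?_).symm
  · rintro ⟨c₁, c₂⟩ hp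
    simp only [Finset.mem_product, Finset.mem_filter, Finset.mem_univ, true_and] at hp ⊢
    exact ⟨c₁, hp.1, c₂, hp.2, rfl⟩
  · rintro ⟨c₁, c₂⟩ _ ⟨c₁', c₂'⟩ _ heq
    have : ∀ k, c₁ k = c₁' k ∧ c₂ k = c₂' k := fun k =>
      phi_pair_inj _ _ _ _ (congrFun heq k)
    exact Prod.ext (funext fun k => (this k).1) (funext fun k => (this k).2)
  · intro u hu
    simp only [Finset.mem_filter, Finset.mem_univ, true_and] at hu
    obtain ⟨c₁, h₁, c₂, h₂, rfl⟩ := hu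
    exact ⟨(c₁, c₂), by simp [Finset.mem_product]; exact ⟨h₁, h₂⟩, rfl⟩
  · rintro ⟨c₁, c₂⟩ _
    obtain ⟨e0, e2, e1, e3⟩ := nI_eq_dij c₁ c₂
    rw [e0, e1, e2, e3, pow_add]
    ring
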